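/- Let M_V = diag(1/b_0,...,1/b_{K-1}) · M_S, where M_S is the tridiagonal matrix with diagonal entries λ_i + ν_i, superdiagonal entries -λ_i, subdiagonal entries -ν_i (with ν_0 = 0, λ_{K-1} = 0, λ_i > 0 for i < K-1, ν_i > 0 for i ≥ 1), and b_i > 0 for all i. Then M_V is diagonalizable over the reals and all of its eigenvalues are real and nonnegative. -/

import Mathlib

/-!
Since the interior rates are positive, the birth–death chain has a positive reversible measure `π`,
`π (i+1) ν (i+1) = π i λ i`. Detailed balance makes `S = diag(π) M_S` symmetric; its off-diagonal
entries are `≤ 0` and its row sums `≥ 0`, so it is diagonally dominant and, by Gershgorin,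
positive semidefinite. Then `M_V = W⁻¹ S` with `W = diag(π b) > 0` is similar to the positive
semidefinite matrix `W^{-1/2} S W^{-1/2}`, and the spectral theorem finishes.
-/

open Matrix Finset

theorem Finset.sum_ite_le_of_subsingleton {ι M : Type*} [AddCommMonoid M] [PartialOrder M]
    [IsOrderedAddMonoid M] {s : Finset ι} {p : ι → Prop} [DecidablePred p]
    (hp : {j | p j}.Subsingleton) {c : M} (hc : 0 ≤ c) :
    ∑ j ∈ s, (if p j then c else 0) ≤ c := by
  rw [sum_ite, sum_const_zero, add_zero, sum_const]
  have hcard : #(s.filter p) ≤ 1 :=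
    card_le_one.2 fun a ha b hb => hp (mem_filter.1 ha).2 (mem_filter.1 hb).2
  simpa using nsmul_le_nsmul_left hc hcard

namespace Matrix

variable {n : Type*} [Fintype n] [DecidableEq n]

def IsDiagonalizableNonneg (A : Matrix n n ℝ) : Prop :=
  ∃ D : Matrix n n ℝ, ∃ Λ : n → ℝ,
    IsUnit D ∧ A = D * diagonal Λ * D⁻¹ ∧ ∀ i, 0 ≤ Λ i

theorem PosSemidef.isDiagonalizableNonneg {A : Matrix n n ℝ} (hA : A.PosSemidef) :
    A.IsDiagonalizableNonneg := by
  set U := hA.isHermitian.eigenvectorUnitary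
  refine ⟨U, hA.isHermitian.eigenvalues, Unitary.isUnit_coe, ?_, hA.eigenvalues_nonneg⟩
  rw [inv_eq_left_inv (Unitary.coe_star_mul_self U)]
  exact hA.isHermitian.spectral_theorem

theorem IsDiagonalizableNonneg.mul_mul_of_mul_eq_one {A P Q : Matrix n n ℝ}
    (hA : A.IsDiagonalizableNonneg) (hPQ : P * Q = 1) : (P * A * Q).IsDiagonalizableNonneg := by
  obtain ⟨D, Λ, hD, rfl, hΛ⟩ := hA
  refine ⟨P * D, Λ, (IsUnit.of_mul_eq_one Q hPQ).mul hD, ?_, hΛ⟩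
  rw [mul_inv_rev, inv_eq_right_inv hPQ]
  simp only [Matrix.mul_assoc]

theorem isDiagonalizableNonneg_diagonal_inv_mul {w : n → ℝ} (hw : ∀ i, 0 < w i)
    {S : Matrix n n ℝ} (hS : S.PosSemidef) : (diagonal w⁻¹ * S).IsDiagonalizableNonneg := by
  set R := diagonal fun i => (√(w i))⁻¹
  have hR_mul : R * diagonal (fun i => √(w i)) = 1 := by
    rw [diagonal_mul_diagonal, ← diagonal_one]
    exact congrArg diagonal (funext fun i => inv_mul_cancel₀ (Real.sqrt_pos.2 (hw i)).ne')
  have hR_sq : R * R = diagonal w⁻¹ := by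
    rw [diagonal_mul_diagonal]
    exact congrArg diagonal (funext fun i => by
      rw [← mul_inv, Real.mul_self_sqrt (hw i).le, Pi.inv_apply])
  have hRSR : (R * S * R).PosSemidef := by
    simpa [R] using hS.conjTranspose_mul_mul_same R
  convert hRSR.isDiagonalizableNonneg.mul_mul_of_mul_eq_one hR_mul using 1
  simp only [← hR_sq, Matrix.mul_assoc, hR_mul, Matrix.mul_one]

theorem IsHermitian.posSemidef_of_sum_abs_le_diag {S : Matrix n n ℝ} (hS : S.IsHermitian)
    (hdom : ∀ i, ∑ j ∈ univ.erase i, |S i j| ≤ S i i) : S.PosSemidef := by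
  refine hS.posSemidef_iff_eigenvalues_nonneg.2 fun i => ?_
  rw [Pi.zero_apply]
  have hμ : Module.End.HasEigenvalue (toLin' S) (hS.eigenvalues i) := by
    rw [Module.End.hasEigenvalue_iff_mem_spectrum, spectrum_toLin']
    exact hS.eigenvalues_mem_spectrum_real i
  obtain ⟨k, hk⟩ := eigenvalue_mem_ball hμ
  rw [Metric.mem_closedBall, Real.dist_eq] at hk
  simp only [Real.norm_eq_abs] at hk
  linarith [(abs_le.1 hk).1, hdom k]

end Matrix

def birthDeathMatrix {K : ℕ} (lam nu : Fin K → ℝ) : Matrix (Fin K) (Fin K) ℝ := fun i j =>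
  if (j : ℕ) = i then lam i + nu i
  else if (j : ℕ) = i + 1 then -lam i
  else if (j : ℕ) + 1 = i then -nu i
  else 0

section BirthDeath

variable {K : ℕ} {lam nu : Fin K → ℝ}

theorem birthDeathMatrix_sum_abs_le_diag (hlam : ∀ i, 0 ≤ lam i) (hnu : ∀ i, 0 ≤ nu i)
    (i : Fin K) :
    ∑ j ∈ univ.erase i, |birthDeathMatrix lam nu i j| ≤ birthDeathMatrix lam nu i i := by
  have hentry : ∀ j ∈ univ.erase i, |birthDeathMatrix lam nu i j|
      = (if (j : ℕ) = i + 1 then lam i else 0) + (if (j : ℕ) + 1 = i then nu i else 0) := by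
    intro j hj
    have hji : (j : ℕ) ≠ i := Fin.val_ne_of_ne (ne_of_mem_erase hj)
    simp only [birthDeathMatrix, if_neg hji]
    split_ifs <;> first | omega | simp [abs_of_nonneg, hlam, hnu]
  have hsucc := sum_ite_le_of_subsingleton (s := univ.erase i)
    (p := fun j : Fin K => (j : ℕ) = i + 1) (fun a ha b hb => Fin.ext (ha.trans hb.symm)) (hlam i)
  have hpred := sum_ite_le_of_subsingleton (s := univ.erase i)
    (p := fun j : Fin K => (j : ℕ) + 1 = i) (fun a ha b hb => Fin.ext (by simp at ha hb; omega))
    (hnu i)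
  rw [sum_congr rfl hentry, sum_add_distrib]
  simp only [birthDeathMatrix, if_pos]
  linarith

theorem exists_detailedBalance (hlam : ∀ i : Fin K, (i : ℕ) < K - 1 → 0 < lam i)
    (hnu : ∀ i : Fin K, 1 ≤ (i : ℕ) → 0 < nu i) :
    ∃ π : Fin K → ℝ, (∀ i, 0 < π i) ∧
      ∀ i j : Fin K, (j : ℕ) = i + 1 → π i * lam i = π j * nu j := by
  set l : ℕ → ℝ := Function.extend Fin.val lam 0
  set n : ℕ → ℝ := Function.extend Fin.val nu 0
  have hl (i : Fin K) : l i = lam i := Fin.val_injective.extend_apply _ _ _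
  have hn (i : Fin K) : n i = nu i := Fin.val_injective.extend_apply _ _ _
  refine ⟨fun i => ∏ m ∈ range i, l m / n (m + 1), fun i => prod_pos fun m hm => ?_, ?_⟩
  · have hm : m < i := mem_range.1 hm
    have := i.isLt
    rw [show m = (⟨m, by omega⟩ : Fin K) from rfl, hl,
      show m + 1 = (⟨m + 1, by omega⟩ : Fin K) from rfl, hn]
    exact div_pos (hlam _ (by simp only; omega)) (hnu _ (by simp))
  · intro i j hij
    have hn_ne : n (i + 1) ≠ 0 := by rw [← hij, hn]; exact (hnu j (by omega)).ne'
    simp only [← hl, ← hn, hij, prod_range_succ]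
    field_simp

theorem birthDeathMatrix_diagonal_mul_isHermitian {π : Fin K → ℝ}
    (hbal : ∀ i j : Fin K, (j : ℕ) = i + 1 → π i * lam i = π j * nu j) :
    (diagonal π * birthDeathMatrix lam nu).IsHermitian := by
  ext i j
  obtain rfl | hij := eq_or_ne i j
  · rfl
  have hij : (i : ℕ) ≠ j := Fin.val_ne_of_ne hij
  simp only [conjTranspose_apply, star_trivial, diagonal_mul, birthDeathMatrix]
  split_ifs <;> first | omega | skip
  · linear_combination -hbal j i ‹_›
  · linear_combination hbal i j ‹_›
  · simp only [mul_zero]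

theorem posSemidef_diagonal_mul_birthDeathMatrix {π : Fin K → ℝ} (hlam : ∀ i, 0 ≤ lam i)
    (hnu : ∀ i, 0 ≤ nu i) (hπ : ∀ i, 0 < π i)
    (hbal : ∀ i j : Fin K, (j : ℕ) = i + 1 → π i * lam i = π j * nu j) :
    (diagonal π * birthDeathMatrix lam nu).PosSemidef := by
  refine (birthDeathMatrix_diagonal_mul_isHermitian hbal).posSemidef_of_sum_abs_le_diag
    fun i => ?_
  simp only [diagonal_mul, abs_mul, abs_of_pos (hπ i), ← mul_sum]
  exact mul_le_mul_of_nonneg_left (birthDeathMatrix_sum_abs_le_diag hlam hnu i) (hπ i).le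

theorem isDiagonalizableNonneg_diagonal_inv_mul_birthDeathMatrix {b : Fin K → ℝ}
    (hb : ∀ i, 0 < b i) (hlam : ∀ i, 0 ≤ lam i) (hnu : ∀ i, 0 ≤ nu i)
    (hlam_pos : ∀ i : Fin K, (i : ℕ) < K - 1 → 0 < lam i)
    (hnu_pos : ∀ i : Fin K, 1 ≤ (i : ℕ) → 0 < nu i) :
    (diagonal b⁻¹ * birthDeathMatrix lam nu).IsDiagonalizableNonneg := by
  obtain ⟨π, hπ, hbal⟩ := exists_detailedBalance hlam_pos hnu_pos
  have hfactor : diagonal b⁻¹ * birthDeathMatrix lam nu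
      = diagonal (π * b)⁻¹ * (diagonal π * birthDeathMatrix lam nu) := by
    rw [← Matrix.mul_assoc, diagonal_mul_diagonal]
    congr 2
    funext i
    simp only [Pi.inv_apply, Pi.mul_apply]
    field_simp [(hπ i).ne']
  rw [hfactor]
  exact isDiagonalizableNonneg_diagonal_inv_mul (fun i => mul_pos (hπ i) (hb i))
    (posSemidef_diagonal_mul_birthDeathMatrix hlam hnu hπ hbal)

end BirthDeath

/-- The matrix `M_V = diag(1/b_i) · M_S` arising from the prefetching ODE
system is diagonalizable over ℝ with real nonnegative eigenvalues. -/
theorem stmt_5 (K : ℕ) (hK : 1 ≤ K) (lam nu b : Fin K → ℝ)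
    (hb : ∀ i, 0 < b i)
    (hnu0 : nu ⟨0, by omega⟩ = 0)
    (hlamlast : lam ⟨K - 1, by omega⟩ = 0)
    (hlam : ∀ i : Fin K, (i : ℕ) < K - 1 → 0 < lam i)
    (hnu : ∀ i : Fin K, 1 ≤ (i : ℕ) → 0 < nu i)
    (MS : Matrix (Fin K) (Fin K) ℝ)
    (hMS : ∀ i j : Fin K, MS i j =
      if (j : ℕ) = (i : ℕ) then lam i + nu i
      else if (j : ℕ) = (i : ℕ) + 1 then -lam i
      else if (j : ℕ) + 1 = (i : ℕ) then -nu i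
      else 0)
    (MV : Matrix (Fin K) (Fin K) ℝ)
    (hMV : MV = Matrix.diagonal (fun i => (b i)⁻¹) * MS) :
    ∃ D : Matrix (Fin K) (Fin K) ℝ, ∃ Λ : Fin K → ℝ,
      IsUnit D ∧ MV = D * Matrix.diagonal Λ * D⁻¹ ∧ ∀ i, 0 ≤ Λ i := by
  have hlam_nonneg (i : Fin K) : 0 ≤ lam i := by
    rcases lt_or_ge (i : ℕ) (K - 1) with h | h
    · exact (hlam i h).le
    · have hi : i = ⟨K - 1, Nat.sub_lt hK one_pos⟩ :=
        Fin.ext (by have := i.isLt; simp only; omega)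
      exact hi ▸ hlamlast.ge
  have hnu_nonneg (i : Fin K) : 0 ≤ nu i := by
    rcases Nat.eq_zero_or_pos i with h | h
    · rw [show i = ⟨0, by omega⟩ from Fin.ext h, hnu0]
    · exact (hnu i h).le
  rw [hMV, show MS = birthDeathMatrix lam nu from Matrix.ext hMS]
  exact isDiagonalizableNonneg_diagonal_inv_mul_birthDeathMatrix hb hlam_nonneg hnu_nonneg hlam hnu
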